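/- G(V) has a cut edge if and only if V has a composition series of length 3 and V has a simple R-submodule contained in a unique maximal R-submodule of V. -/

import Mathlib

/-- The vertices of the intersection graph: proper submodules of `V`. -/
def ProperSubmodule (R V : Type*) [Ring R] [AddCommGroup V] [Module R V] :=
  {W : Submodule R V // W ≠ ⊥ ∧ W ≠ ⊤}

/-- The intersection graph of proper submodules of `V`: two distinct proper
submodules are adjacent iff their intersection is nonzero. -/
def intersectionGraph (R V : Type*) [Ring R] [AddCommGroup V] [Module R V] :
    SimpleGraph (ProperSubmodule R V) where
  Adj U W := U ≠ W ∧ U.1 ⊓ W.1 ≠ ⊥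
  symm := by
    constructor
    intro U W h
    exact ⟨h.1.symm, by rw [inf_comm]; exact h.2⟩
  loopless := ⟨fun U h => h.1 rfl⟩

/-- `V` has a composition series (from `⊥` to `⊤`) of length `n`. -/
def HasCompositionSeriesOfLength (R V : Type*) [Ring R] [AddCommGroup V] [Module R V]
    (n : ℕ) : Prop :=
  ∃ s : RelSeries {(x, y) : Submodule R V × Submodule R V | x ⋖ y},
    s.head = ⊥ ∧ s.last = ⊤ ∧ s.length = n

/-- A cut edge: an edge of `G` whose removal (keeping its endpoints) disconnects
two vertices that were connected, i.e. increases the number of components. -/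
def SimpleGraph.IsCutEdge {α : Type*} (G : SimpleGraph α) (x y : α) : Prop :=
  G.Adj x y ∧ ∃ a b : α, G.Reachable a b ∧ ¬ (G.deleteEdges {s(x, y)}).Reachable a b

/-! An edge `x – y` is a cut edge only if `x` and `y` have no common neighbour. For incomparable
`x, y` the submodule `x ⊓ y` would be one, so `x < y`; a submodule strictly below `x`, strictly
between `x` and `y`, strictly above `y`, or a second maximal submodule above `x` would be one too.
Hence `0 ⋖ x ⋖ y ⋖ V` and `y` is the only maximal submodule containing the simple submodule `x`.

Conversely, if `V` has length 3 then the lengths of `W` and `V ⧸ W` add up to 3, so every proper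
nonzero `W` is either simple or maximal, and not both. A neighbour of a simple `S` contains `S`,
so it is maximal; if `M` is the only maximal submodule above `S`, the edge `S – M` is pendant. -/

namespace SimpleGraph

variable {α : Type*} {G : SimpleGraph α} {x y z : α}

theorem isCutEdge_iff : G.IsCutEdge x y ↔ G.Adj x y ∧ G.IsBridge s(x, y) := by
  refine ⟨fun ⟨hxy, a, b, hab, hnot⟩ ↦ ⟨hxy, isBridge_iff.mpr fun hr ↦ hnot ?_⟩,
    fun ⟨hxy, hb⟩ ↦ ⟨hxy, x, y, hxy.reachable, hb⟩⟩
  rw [reachable_iff_reflTransGen] at hab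
  refine Relation.reflTransGen_le_of_equivalence_of_le (reachable_is_equivalence _)
    (fun u v huv ↦ ?_) _ _ hab
  by_cases he : s(u, v) = s(x, y)
  · rcases Sym2.eq_iff.mp he with ⟨rfl, rfl⟩ | ⟨rfl, rfl⟩
    exacts [hr, hr.symm]
  · exact (deleteEdges_adj.mpr ⟨huv, he⟩).reachable

theorem IsBridge.not_adj_of_adj (hb : G.IsBridge s(x, y)) (hxz : G.Adj x z) : ¬ G.Adj z y := by
  intro hzy
  refine isBridge_iff.mp hb ((deleteEdges_adj.mpr ⟨hxz, ?_⟩).reachable.trans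
    (deleteEdges_adj.mpr ⟨hzy, ?_⟩).reachable)
  · intro h
    exact hzy.ne (Sym2.congr_right.mp h)
  · intro h
    exact hxz.ne (Sym2.congr_left.mp h).symm

theorem isBridge_of_forall_adj_eq (hxy : x ≠ y) (h : ∀ z, G.Adj x z → z = y) :
    G.IsBridge s(x, y) := by
  rw [isBridge_iff_forall_walk_mem_edges]
  rintro (_ | ⟨hxz, p⟩)
  · exact absurd rfl hxy
  · obtain rfl := h _ hxz
    simp

end SimpleGraph

section

variable {R V : Type*} [Ring R] [AddCommGroup V] [Module R V]

theorem Module.length_eq_of_hasCompositionSeriesOfLength {n : ℕ}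
    (h : HasCompositionSeriesOfLength R V n) : Module.length R V = n := by
  obtain ⟨s, hs₁, hs₂, rfl⟩ := h
  exact (Module.length_compositionSeries s hs₁ hs₂).symm

theorem hasCompositionSeriesOfLength_three {a b : Submodule R V}
    (h₁ : ⊥ ⋖ a) (h₂ : a ⋖ b) (h₃ : b ⋖ ⊤) : HasCompositionSeriesOfLength R V 3 := by
  refine ⟨⟨3, ![⊥, a, b, ⊤], fun i ↦ ?_⟩, by simp [RelSeries.head],
    by simp [RelSeries.last], rfl⟩
  fin_cases i
  exacts [h₁, h₂, h₃]

theorem Submodule.length_add_length_quotient (W : Submodule R V) :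
    Module.length R W + Module.length R (V ⧸ W) = Module.length R V :=
  (Module.length_eq_add_of_exact W.subtype W.mkQ W.injective_subtype W.mkQ_surjective
    (LinearMap.exact_subtype_mkQ W)).symm

theorem Submodule.isAtom_iff_not_isCoatom_of_length_eq_three
    (hV : Module.length R V = 3) {W : Submodule R V} (hW₀ : W ≠ ⊥) (hW₁ : W ≠ ⊤) :
    IsAtom W ↔ ¬ IsCoatom W := by
  rw [← isSimpleModule_iff_isAtom, ← isSimpleModule_iff_isCoatom, ← Module.length_eq_one_iff,
    ← Module.length_eq_one_iff]
  have hsum := W.length_add_length_quotient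
  have ha : Module.length R W ≠ 0 := by
    rwa [Ne, Module.length_eq_zero_iff, Submodule.subsingleton_iff_eq_bot]
  have hb : Module.length R (V ⧸ W) ≠ 0 := by
    rwa [Ne, Module.length_eq_zero_iff, Submodule.Quotient.subsingleton_iff]
  rw [hV] at hsum
  generalize Module.length R W = a at *
  generalize Module.length R (V ⧸ W) = b at *
  have hab : a ≠ ⊤ ∧ b ≠ ⊤ := by
    constructor <;> rintro rfl <;> simp at hsum
  lift a to ℕ using hab.1
  lift b to ℕ using hab.2
  norm_cast at *
  omega

end

namespace ProperSubmodule

variable {R V : Type*} [Ring R] [AddCommGroup V] [Module R V] {x y : ProperSubmodule R V}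

theorem intersectionGraph_adj_of_lt (h : x.1 < y.1) : (intersectionGraph R V).Adj x y :=
  ⟨fun e ↦ h.ne (congrArg Subtype.val e), by rw [inf_eq_left.mpr h.le]; exact x.2.1⟩

open SimpleGraph

theorem lt_or_gt_of_isBridge (hxy : (intersectionGraph R V).Adj x y)
    (hb : (intersectionGraph R V).IsBridge s(x, y)) : x.1 < y.1 ∨ y.1 < x.1 := by
  have hne : x.1 ≠ y.1 := fun h ↦ hxy.1 (Subtype.ext h)
  by_cases hle : x.1 ≤ y.1
  · exact .inl (hle.lt_of_ne hne)
  by_cases hge : y.1 ≤ x.1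
  · exact .inr (hge.lt_of_ne hne.symm)
  let z : ProperSubmodule R V := ⟨x.1 ⊓ y.1, hxy.2, ne_top_of_le_ne_top x.2.2 inf_le_left⟩
  have hzx : z.1 < x.1 := inf_le_left.lt_of_ne (mt inf_eq_left.mp hle)
  have hzy : z.1 < y.1 := inf_le_right.lt_of_ne (mt inf_eq_right.mp hge)
  exact absurd (intersectionGraph_adj_of_lt hzy)
    (IsBridge.not_adj_of_adj hb (intersectionGraph_adj_of_lt hzx).symm)

theorem isAtom_covBy_isCoatom_of_isBridge (hb : (intersectionGraph R V).IsBridge s(x, y))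
    (hlt : x.1 < y.1) : IsAtom x.1 ∧ x.1 ⋖ y.1 ∧ IsCoatom y.1 := by
  refine ⟨⟨x.2.1, fun W hW ↦ by_contra fun hW₀ ↦ ?_⟩, ⟨hlt, fun W hxW hWy ↦ ?_⟩,
    ⟨y.2.2, fun W hW ↦ by_contra fun hW₁ ↦ ?_⟩⟩
  · let w : ProperSubmodule R V := ⟨W, hW₀, ne_top_of_lt (hW.trans hlt)⟩
    exact IsBridge.not_adj_of_adj hb (intersectionGraph_adj_of_lt (x := w) hW).symm
      (intersectionGraph_adj_of_lt (hW.trans hlt))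
  · let w : ProperSubmodule R V := ⟨W, ne_bot_of_gt hxW, ne_top_of_lt hWy⟩
    exact IsBridge.not_adj_of_adj hb (intersectionGraph_adj_of_lt (y := w) hxW)
      (intersectionGraph_adj_of_lt hWy)
  · let w : ProperSubmodule R V := ⟨W, ne_bot_of_gt (hlt.trans hW), hW₁⟩
    exact IsBridge.not_adj_of_adj hb (intersectionGraph_adj_of_lt (y := w) (hlt.trans hW))
      (intersectionGraph_adj_of_lt hW).symm

theorem eq_of_isCoatom_of_isBridge (hb : (intersectionGraph R V).IsBridge s(x, y))
    (hlt : x.1 < y.1) {M : Submodule R V} (hM : IsCoatom M) (hxM : x.1 ≤ M) : M = y.1 := by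
  by_contra hne
  let m : ProperSubmodule R V := ⟨M, ne_bot_of_le_ne_bot x.2.1 hxM, hM.1⟩
  have hxM' : x.1 < M := hxM.lt_of_ne fun h ↦ y.2.2 (hM.2 _ (h ▸ hlt))
  refine IsBridge.not_adj_of_adj hb (intersectionGraph_adj_of_lt (y := m) hxM') ⟨?_, ?_⟩
  · exact fun h ↦ hne (congrArg Subtype.val h)
  · exact ne_bot_of_le_ne_bot x.2.1 (le_inf hxM hlt.le)

theorem exists_isCutEdge_of_length_eq_three (hV : Module.length R V = 3)
    {S M : Submodule R V} (hS : IsAtom S) (hM : IsCoatom M) (hSM : S ≤ M)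
    (huniq : ∀ N, IsCoatom N → S ≤ N → N = M) :
    ∃ x y : ProperSubmodule R V, (intersectionGraph R V).IsCutEdge x y := by
  have hSM' : S < M := hSM.lt_of_ne fun h ↦
    (Submodule.isAtom_iff_not_isCoatom_of_length_eq_three hV hS.1 (h ▸ hM.1)).mp hS (h ▸ hM)
  let s : ProperSubmodule R V := ⟨S, hS.1, ne_top_of_lt hSM'⟩
  let m : ProperSubmodule R V := ⟨M, ne_bot_of_gt hSM', hM.1⟩
  have hsm : (intersectionGraph R V).Adj s m := intersectionGraph_adj_of_lt hSM'
  refine ⟨s, m, isCutEdge_iff.mpr ⟨hsm, isBridge_of_forall_adj_eq hsm.ne ?_⟩⟩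
  rintro ⟨W, hW₀, hW₁⟩ ⟨hne, hinf⟩
  have hSW : S < W := (inf_eq_left.mp ((hS.ne_bot_iff_eq inf_le_left).mp hinf)).lt_of_ne
    fun h ↦ hne (Subtype.ext h)
  have hW : IsCoatom W := by
    by_contra hW
    have hWatom := (Submodule.isAtom_iff_not_isCoatom_of_length_eq_three hV hW₀ hW₁).mpr hW
    exact hS.1 (hWatom.2 S hSW)
  exact Subtype.ext (huniq W hW hSW.le)

end ProperSubmodule

open SimpleGraph ProperSubmodule in
theorem stmt6 (R V : Type*) [Ring R] [AddCommGroup V] [Module R V] :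
    (∃ x y : ProperSubmodule R V, (intersectionGraph R V).IsCutEdge x y) ↔
      (HasCompositionSeriesOfLength R V 3 ∧
        ∃ S : Submodule R V, IsSimpleModule R S ∧
          ∃! M : Submodule R V, IsCoatom M ∧ S ≤ M) := by
  constructor
  · rintro ⟨x, y, hcut⟩
    obtain ⟨hxy, hb⟩ := isCutEdge_iff.mp hcut
    clear hcut
    wlog hlt : x.1 < y.1 generalizing x y
    · exact this y x hxy.symm (Sym2.eq_swap ▸ hb)
        ((lt_or_gt_of_isBridge hxy hb).resolve_left hlt)
    obtain ⟨hx, hcov, hy⟩ := isAtom_covBy_isCoatom_of_isBridge hb hlt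
    exact ⟨hasCompositionSeriesOfLength_three hx.bot_covBy hcov hy.covBy_top,
      x.1, isSimpleModule_iff_isAtom.mpr hx,
      y.1, ⟨hy, hlt.le⟩, fun M hM ↦ eq_of_isCoatom_of_isBridge hb hlt hM.1 hM.2⟩
  · rintro ⟨hV, S, hS, M, ⟨hM, hSM⟩, huniq⟩
    exact exists_isCutEdge_of_length_eq_three (Module.length_eq_of_hasCompositionSeriesOfLength hV)
      (isSimpleModule_iff_isAtom.mp hS) hM hSM fun N hN hSN ↦ huniq N ⟨hN, hSN⟩
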